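/- Let D(z,λ) = h₀(λ) + ∑_{i=1}^d (z_i + z_i⁻¹)·h_i(λ) be a minimally sparse dispersion polynomial. Assume: for every corner point x ∈ {−1,1}^d and every λ₀ ∈ ℂ with D(x,λ₀) = 0, one has h_i(λ₀) ≠ 0 for every i = 1,…,d. Then every critical point (x,λ₀) of D has x a corner point, and at every such critical point the Hessian matrix (∂²D/∂z_i∂z_j(x,λ₀))_{i,j} is an invertible diagonal matrix (with diagonal entries 2·x_i·h_i(λ₀) ≠ 0). -/

import Mathlib

/-!
Since `D` is a sum of one-variable terms, `∂D/∂z_i = (1 - z_i⁻²)·h_i(λ)` and the Hessian is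
diagonal with entries `2 z_i⁻³ h_i(λ)`. At a critical point `(x, λ₀)` every coordinate with
`x_i² ≠ 1` therefore has `h_i(λ₀) = 0`, so resetting those coordinates to `1` yields a corner
point that is still a zero of `D(·, λ₀)`. The hypothesis at that corner makes every `h_i(λ₀)`
nonzero, so there were no such coordinates, and the Hessian entries are `2 x_i h_i(λ₀) ≠ 0`.
-/

/-- The minimally sparse dispersion polynomial
`D(z,λ) = h₀(λ) + ∑_{i=1}^d (z_i + z_i⁻¹)·h_i(λ)`. -/
noncomputable def Dms (d : ℕ) (h0 : Polynomial ℂ) (h : Fin d → Polynomial ℂ)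
    (z : Fin d → ℂ) (lam : ℂ) : ℂ :=
  Polynomial.eval lam h0 + ∑ i, (z i + (z i)⁻¹) * Polynomial.eval lam (h i)

/-- The partial derivative `∂D/∂z_i`. -/
noncomputable def DmsPD (d : ℕ) (h0 : Polynomial ℂ) (h : Fin d → Polynomial ℂ)
    (i : Fin d) (z : Fin d → ℂ) (lam : ℂ) : ℂ :=
  deriv (fun t => Dms d h0 h (Function.update z i t) lam) (z i)

/-- The second partial derivative `∂²D/∂z_j∂z_i`. -/
noncomputable def DmsPD2 (d : ℕ) (h0 : Polynomial ℂ) (h : Fin d → Polynomial ℂ)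
    (i j : Fin d) (z : Fin d → ℂ) (lam : ℂ) : ℂ :=
  deriv (fun s => DmsPD d h0 h i (Function.update z j s) lam) (z j)

lemma exists_corner_eq_of_sq_eq_one {ι R : Type*} [Ring R] [NoZeroDivisors R] (x : ι → R) :
    ∃ c : ι → R, (∀ j, c j = 1 ∨ c j = -1) ∧ ∀ j, x j ^ 2 = 1 → c j = x j := by
  classical
  refine ⟨fun j => if x j ^ 2 = 1 then x j else 1, fun j => ?_, fun j hj => if_pos hj⟩
  dsimp only
  split_ifs with hj
  · exact sq_eq_one_iff.1 hj
  · exact Or.inl rfl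

section MinimallySparse

variable {d : ℕ} (h0 : Polynomial ℂ) (h : Fin d → Polynomial ℂ)

lemma Dms_congr {x y : Fin d → ℂ} {lam : ℂ} (hxy : ∀ j, x j = y j ∨ (h j).eval lam = 0) :
    Dms d h0 h x lam = Dms d h0 h y lam := by
  unfold Dms
  congr 1
  refine Finset.sum_congr rfl fun j _ => ?_
  rcases hxy j with hj | hj <;> simp [hj]

lemma Dms_update_sub (z : Fin d → ℂ) (i : Fin d) (t lam : ℂ) :
    Dms d h0 h (Function.update z i t) lam - Dms d h0 h z lam =
      (t + t⁻¹ - (z i + (z i)⁻¹)) * (h i).eval lam := by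
  unfold Dms
  rw [add_sub_add_left_eq_sub, ← Finset.sum_sub_distrib, Fintype.sum_eq_single i]
  · simp only [Function.update_self]
    ring
  · intro k hk
    simp [Function.update_of_ne hk]

lemma hasDerivAt_Dms_update (z : Fin d → ℂ) (i : Fin d) {t : ℂ} (lam : ℂ) (ht : t ≠ 0) :
    HasDerivAt (fun s => Dms d h0 h (Function.update z i s) lam)
      ((1 - (t ^ 2)⁻¹) * (h i).eval lam) t := by
  have hsep : (fun s => Dms d h0 h (Function.update z i s) lam) =
      fun s => (s + s⁻¹ - (z i + (z i)⁻¹)) * (h i).eval lam + Dms d h0 h z lam := by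
    funext s
    rw [← Dms_update_sub, sub_add_cancel]
  rw [hsep, sub_eq_add_neg 1]
  exact ((((hasDerivAt_id t).add (hasDerivAt_inv ht)).sub_const _).mul_const _).add_const _

lemma DmsPD_eq {z : Fin d → ℂ} {i : Fin d} (lam : ℂ) (hz : z i ≠ 0) :
    DmsPD d h0 h i z lam = (1 - (z i ^ 2)⁻¹) * (h i).eval lam :=
  (hasDerivAt_Dms_update h0 h z i lam hz).deriv

lemma DmsPD_eq_zero_iff {z : Fin d → ℂ} {i : Fin d} {lam : ℂ} (hz : z i ≠ 0) :
    DmsPD d h0 h i z lam = 0 ↔ z i ^ 2 = 1 ∨ (h i).eval lam = 0 := by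
  rw [DmsPD_eq h0 h lam hz, mul_eq_zero, sub_eq_zero, eq_comm, inv_eq_one]

lemma DmsPD2_of_ne {z : Fin d → ℂ} {i j : Fin d} (lam : ℂ) (hij : i ≠ j) (hz : z i ≠ 0) :
    DmsPD2 d h0 h i j z lam = 0 := by
  have hconst : (fun s => DmsPD d h0 h i (Function.update z j s) lam) =
      fun _ => (1 - (z i ^ 2)⁻¹) * (h i).eval lam := by
    funext s
    rw [DmsPD_eq h0 h lam (by rwa [Function.update_of_ne hij]), Function.update_of_ne hij]
  rw [DmsPD2, hconst, deriv_const]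

lemma DmsPD2_self {z : Fin d → ℂ} {i : Fin d} (lam : ℂ) (hz : z i ≠ 0) :
    DmsPD2 d h0 h i i z lam = 2 * (z i ^ 3)⁻¹ * (h i).eval lam := by
  have hnear : (fun s => DmsPD d h0 h i (Function.update z i s) lam) =ᶠ[nhds (z i)]
      fun s => (1 - (s ^ 2)⁻¹) * (h i).eval lam := by
    filter_upwards [eventually_ne_nhds hz] with s hs
    rw [DmsPD_eq h0 h lam (by rwa [Function.update_self]), Function.update_self]
  have hderiv : HasDerivAt (fun s => (1 - (s ^ 2)⁻¹) * (h i).eval lam)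
      (2 * (z i ^ 3)⁻¹ * (h i).eval lam) (z i) := by
    refine ((((hasDerivAt_pow 2 (z i)).inv (pow_ne_zero 2 hz)).const_sub 1).mul_const
      ((h i).eval lam)).congr_deriv ?_
    field_simp
    ring
  rw [DmsPD2, hnear.deriv_eq, hderiv.deriv]

lemma hessian_Dms_eq_diagonal {z : Fin d → ℂ} (lam : ℂ) (hz : ∀ k, z k ≠ 0) :
    Matrix.of (fun i j => DmsPD2 d h0 h i j z lam) =
      Matrix.diagonal fun i => 2 * (z i ^ 3)⁻¹ * (h i).eval lam := by
  ext i j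
  by_cases hij : i = j
  · subst hij
    simp [DmsPD2_self h0 h lam (hz i)]
  · simp [hij, DmsPD2_of_ne h0 h lam hij (hz i)]

end MinimallySparse

theorem stmt_4_general (d : ℕ) (h0 : Polynomial ℂ) (h : Fin d → Polynomial ℂ)
    (hgen : ∀ (x : Fin d → ℂ), (∀ i, x i = 1 ∨ x i = -1) → ∀ lam0 : ℂ,
      Dms d h0 h x lam0 = 0 → ∀ i : Fin d, Polynomial.eval lam0 (h i) ≠ 0) :
    ∀ (x : Fin d → ℂ) (lam0 : ℂ), (∀ i, x i ≠ 0) →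
      Dms d h0 h x lam0 = 0 →
      (∀ i, DmsPD d h0 h i x lam0 = 0) →
      -- x is a corner point
      (∀ i, (x i) ^ 2 = 1) ∧
      -- the Hessian is the diagonal matrix with nonzero entries 2·x_i·h_i(λ₀)
      (Matrix.of (fun i j : Fin d => DmsPD2 d h0 h i j x lam0)
        = Matrix.diagonal (fun i => 2 * x i * Polynomial.eval lam0 (h i))) ∧
      (∀ i : Fin d, 2 * x i * Polynomial.eval lam0 (h i) ≠ 0) ∧
      IsUnit (Matrix.of (fun i j : Fin d => DmsPD2 d h0 h i j x lam0)) := by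
  intro x lam0 hx hD hcrit
  have hcorner_or_root (i : Fin d) : x i ^ 2 = 1 ∨ (h i).eval lam0 = 0 :=
    (DmsPD_eq_zero_iff h0 h (hx i)).1 (hcrit i)
  obtain ⟨c, hc_corner, hc_eq⟩ := exists_corner_eq_of_sq_eq_one x
  have hc_root : Dms d h0 h c lam0 = 0 := by
    rw [Dms_congr h0 h fun j => (hcorner_or_root j).imp (hc_eq j) id, hD]
  have hne : ∀ i, (h i).eval lam0 ≠ 0 := hgen c hc_corner lam0 hc_root
  have hcorner (i : Fin d) : x i ^ 2 = 1 := (hcorner_or_root i).resolve_right (hne i)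
  have hdiag (i : Fin d) : 2 * x i * (h i).eval lam0 ≠ 0 := by simp [hx i, hne i]
  have hhess : Matrix.of (fun i j => DmsPD2 d h0 h i j x lam0) =
      Matrix.diagonal fun i => 2 * x i * (h i).eval lam0 := by
    rw [hessian_Dms_eq_diagonal h0 h lam0 hx]
    congr with i
    -- `x_i⁴ = 1`, so `(x_i³)⁻¹ = x_i`
    rw [inv_eq_of_mul_eq_one_right (by linear_combination (x i ^ 2 + 1) * hcorner i)]
  refine ⟨hcorner, hhess, hdiag, ?_⟩
  rw [hhess, Matrix.isUnit_diagonal, Pi.isUnit_iff]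
  exact fun i => (hdiag i).isUnit

/-- Suppose that for every corner point `x ∈ {−1,1}^d` and every `λ₀` with `D(x,λ₀) = 0`
one has `h_i(λ₀) ≠ 0` for every `i`.  Then every critical point `(x,λ₀)` of `D` has `x`
a corner point, and at every critical point the Hessian is an invertible diagonal matrix
with nonzero diagonal entries `2·x_i·h_i(λ₀)`. -/
theorem stmt_4 (d : ℕ) (hd : 1 ≤ d) (h0 : Polynomial ℂ) (h : Fin d → Polynomial ℂ)
    (hgen : ∀ (x : Fin d → ℂ), (∀ i, x i = 1 ∨ x i = -1) → ∀ lam0 : ℂ,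
      Dms d h0 h x lam0 = 0 → ∀ i : Fin d, Polynomial.eval lam0 (h i) ≠ 0) :
    ∀ (x : Fin d → ℂ) (lam0 : ℂ), (∀ i, x i ≠ 0) →
      Dms d h0 h x lam0 = 0 →
      (∀ i, DmsPD d h0 h i x lam0 = 0) →
      -- x is a corner point
      (∀ i, (x i) ^ 2 = 1) ∧
      -- the Hessian is the diagonal matrix with nonzero entries 2·x_i·h_i(λ₀)
      (Matrix.of (fun i j : Fin d => DmsPD2 d h0 h i j x lam0)
        = Matrix.diagonal (fun i => 2 * x i * Polynomial.eval lam0 (h i))) ∧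
      (∀ i : Fin d, 2 * x i * Polynomial.eval lam0 (h i) ≠ 0) ∧
      IsUnit (Matrix.of (fun i j : Fin d => DmsPD2 d h0 h i j x lam0)) :=
  stmt_4_general d h0 h hgen
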